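/- arXiv:2509.20749 — 4 statements merged into one kernel-verified Lean document; each statement's English description precedes it below -/
import Mathlib

section
/- Let M be the real symmetric block matrix M = [[L', Aφ, AS], [Aφ, L', AS], [ASᵀ, ASᵀ, LS]] of size 2n+m, and let M̃₊ = [[L' + Aφ, √2·AS], [√2·ASᵀ, LS]] and M₋ = L' − Aφ. Then the characteristic polynomial of M equals the product of the characteristic polynomials of M̃₊ and M₋. -/
/-!
Conjugating by the orthogonal involution `(x, y, z) ↦ ((x + y)/√2, (x - y)/√2, z)` splits the
two copies of `ℝⁿ` into their symmetric and antisymmetric parts. The symmetric part sees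
`L' + Aφ` coupled to the third block through `√2·AS`, the antisymmetric part sees only `L' - Aφ`,
so after reordering the blocks the matrix is block triangular with diagonal blocks `M̃₊` and `M₋`.
-/

open Matrix

namespace Matrix

variable {R : Type*} [CommRing R] {n m : Type*} [Fintype n] [DecidableEq n]

theorem charpoly_conj_of_mul_self_eq_one {U : Matrix n n R} (hU : U * U = 1)
    (N : Matrix n n R) : (U * N * U).charpoly = N.charpoly := by
  rw [charpoly_mul_comm, ← Matrix.mul_assoc, hU, Matrix.one_mul]

theorem charpoly_fromBlocks_fromBlocks_zero [Fintype m] [DecidableEq m]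
    {n' : Type*} [Fintype n'] [DecidableEq n']
    (A : Matrix n n R) (B : Matrix n m R) (C : Matrix m n R) (D : Matrix n' n' R)
    (E : Matrix m m R) :
    (fromBlocks (fromBlocks A 0 0 D) (fromRows B 0) (fromCols C 0) E).charpoly =
      (fromBlocks A B C E).charpoly * D.charpoly := by
  let e : (n ⊕ n') ⊕ m ≃ (n ⊕ m) ⊕ n' :=
    (Equiv.sumAssoc _ _ _).trans
      (((Equiv.refl n).sumCongr (Equiv.sumComm n' m)).trans (Equiv.sumAssoc _ _ _).symm)
  rw [← charpoly_reindex e, ← charpoly_fromBlocks_zero₁₂ _ (0 : Matrix n' (n ⊕ m) R)]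
  congr 1
  ext (⟨i | i⟩ | i) (⟨j | j⟩ | j) <;> rfl

variable (n) in
def hadamardBlocks (c : R) : Matrix (n ⊕ n) (n ⊕ n) R :=
  fromBlocks (c • 1) (c • 1) (c • 1) (-(c • 1))

variable {c : R}

theorem hadamardBlocks_mul_self (hc : c * c + c * c = 1) :
    hadamardBlocks n c * hadamardBlocks n c = 1 := by
  simp only [hadamardBlocks, fromBlocks_multiply, smul_mul_smul_comm, Matrix.mul_one,
    Matrix.neg_mul, Matrix.mul_neg, neg_neg, ← add_smul, hc, one_smul, ← sub_eq_add_neg,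
    sub_self, fromBlocks_one]

theorem hadamardBlocks_conj_fromBlocks (hc : c * c + c * c = 1) (A B : Matrix n n R) :
    hadamardBlocks n c * fromBlocks A B B A * hadamardBlocks n c =
      fromBlocks (A + B) 0 0 (A - B) := by
  simp only [hadamardBlocks, fromBlocks_multiply, Matrix.smul_mul, Matrix.mul_smul,
    Matrix.one_mul, Matrix.mul_one, Matrix.neg_mul, Matrix.mul_neg, smul_neg, smul_smul,
    smul_add]
  congr 1 <;> match_scalars <;> grind

theorem hadamardBlocks_mul_fromRows (X : Matrix n m R) :
    hadamardBlocks n c * fromRows X X = fromRows ((c + c) • X) 0 := by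
  simp only [hadamardBlocks, fromBlocks_mul_fromRows, Matrix.smul_mul, Matrix.one_mul,
    Matrix.neg_mul, add_smul, add_neg_cancel]

theorem fromCols_mul_hadamardBlocks [Fintype m] (Y : Matrix m n R) :
    fromCols Y Y * hadamardBlocks n c = fromCols ((c + c) • Y) 0 := by
  simp only [hadamardBlocks, fromCols_mul_fromBlocks, Matrix.mul_smul, Matrix.mul_one,
    Matrix.mul_neg, add_smul, add_neg_cancel]

theorem charpoly_fromBlocks_fromBlocks_swap [Fintype m] [DecidableEq m]
    (hc : c * c + c * c = 1) (A B : Matrix n n R) (X : Matrix n m R) (Y : Matrix m n R)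
    (E : Matrix m m R) :
    (fromBlocks (fromBlocks A B B A) (fromRows X X) (fromCols Y Y) E).charpoly =
      (fromBlocks (A + B) ((c + c) • X) ((c + c) • Y) E).charpoly * (A - B).charpoly := by
  let P : Matrix ((n ⊕ n) ⊕ m) ((n ⊕ n) ⊕ m) R := fromBlocks (hadamardBlocks n c) 0 0 1
  have hP : P * P = 1 := by
    simp only [P, fromBlocks_multiply, hadamardBlocks_mul_self hc, Matrix.mul_zero,
      Matrix.zero_mul, Matrix.mul_one, add_zero, zero_add, fromBlocks_one]
  rw [← charpoly_conj_of_mul_self_eq_one hP, ← charpoly_fromBlocks_fromBlocks_zero]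
  congr 1
  simp only [P, fromBlocks_multiply, Matrix.mul_zero, Matrix.zero_mul, Matrix.mul_one,
    Matrix.one_mul, add_zero, zero_add, hadamardBlocks_conj_fromBlocks hc,
    hadamardBlocks_mul_fromRows, fromCols_mul_hadamardBlocks]

end Matrix

theorem stmt4_general (n m : ℕ) (L' Aφ : Matrix (Fin n) (Fin n) ℝ)
    (AS : Matrix (Fin n) (Fin m) ℝ) (LS : Matrix (Fin m) (Fin m) ℝ)
    (M : Matrix ((Fin n ⊕ Fin n) ⊕ Fin m) ((Fin n ⊕ Fin n) ⊕ Fin m) ℝ)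
    (hM : M = fromBlocks (fromBlocks L' Aφ Aφ L') (fromRows AS AS)
        (fromCols ASᵀ ASᵀ) LS) :
    M.charpoly =
      (fromBlocks (L' + Aφ) (Real.sqrt 2 • AS) (Real.sqrt 2 • ASᵀ) LS).charpoly *
        (L' - Aφ).charpoly := by
  have hc : Real.sqrt 2 / 2 * (Real.sqrt 2 / 2) + Real.sqrt 2 / 2 * (Real.sqrt 2 / 2) = 1 := by
    nlinarith [Real.mul_self_sqrt (show (0 : ℝ) ≤ 2 by norm_num)]
  rw [hM, charpoly_fromBlocks_fromBlocks_swap hc, add_halves]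

/-- The characteristic polynomial of the block matrix
`M = [[L', Aφ, AS], [Aφ, L', AS], [ASᵀ, ASᵀ, LS]]` factors as the product of the
characteristic polynomials of `M̃₊ = [[L' + Aφ, √2·AS], [√2·ASᵀ, LS]]`
and `M₋ = L' − Aφ`. -/
theorem stmt4 (n m : ℕ) (L' Aφ : Matrix (Fin n) (Fin n) ℝ)
    (AS : Matrix (Fin n) (Fin m) ℝ) (LS : Matrix (Fin m) (Fin m) ℝ)
    (hL' : L'.IsSymm) (hAφ : Aφ.IsSymm) (hLS : LS.IsSymm)
    (M : Matrix ((Fin n ⊕ Fin n) ⊕ Fin m) ((Fin n ⊕ Fin n) ⊕ Fin m) ℝ)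
    (hM : M = fromBlocks (fromBlocks L' Aφ Aφ L') (fromRows AS AS)
        (fromCols ASᵀ ASᵀ) LS) :
    M.charpoly =
      (fromBlocks (L' + Aφ) (Real.sqrt 2 • AS) (Real.sqrt 2 • ASᵀ) LS).charpoly *
        (L' - Aφ).charpoly :=
  stmt4_general n m L' Aφ AS LS M hM
end

section
/- Let M be the real symmetric block matrix M = [[L', Aφ, AS], [Aφ, L', AS], [ASᵀ, ASᵀ, LS]], and let N = [[(1/√2)Iₙ, 0], [(1/√2)Iₙ, 0], [0, Iₘ]], M̃₊ = [[L' + Aφ, √2·AS], [√2·ASᵀ, LS]]. Then for every real t, exp(itM)·N = N·exp(itM̃₊), where exp denotes the matrix exponential over the complex numbers. -/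
/-!
`N` is an isometric embedding onto the vectors whose two `Fin n`-blocks agree; `M` preserves
that subspace and acts on it as `M̃₊`, i.e. `M * N = N * M̃₊`. An intertwining relation
`X * P = P * Y` passes to all powers, hence termwise to the exponential series.
-/

open Matrix Complex

theorem Matrix.pow_mul_eq_mul_pow_of_mul_eq {R p q : Type*} [Semiring R]
    [Fintype p] [DecidableEq p] [Fintype q] [DecidableEq q]
    {X : Matrix p p R} {P : Matrix p q R} {Y : Matrix q q R} (h : X * P = P * Y) (k : ℕ) :
    X ^ k * P = P * Y ^ k := by
  induction k with
  | zero => simp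
  | succ k ih => rw [pow_succ, pow_succ, Matrix.mul_assoc, h, ← Matrix.mul_assoc, ih,
      Matrix.mul_assoc]

theorem Matrix.exp_mul_eq_mul_exp_of_mul_eq {p q : Type*}
    [Fintype p] [DecidableEq p] [Fintype q] [DecidableEq q]
    {X : Matrix p p ℂ} {P : Matrix p q ℂ} {Y : Matrix q q ℂ} (h : X * P = P * Y) :
    NormedSpace.exp X * P = P * NormedSpace.exp Y := by
  -- The ∞-operator norm is only used to make the exponential series summable.
  let : NormedRing (Matrix p p ℂ) := Matrix.linftyOpNormedRing
  let : NormedAlgebra ℂ (Matrix p p ℂ) := Matrix.linftyOpNormedAlgebra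
  let : NormedRing (Matrix q q ℂ) := Matrix.linftyOpNormedRing
  let : NormedAlgebra ℂ (Matrix q q ℂ) := Matrix.linftyOpNormedAlgebra
  have hX := (NormedSpace.expSeries_summable' (𝕂 := ℂ) X).hasSum.map
    (mulRightLinearMap p ℂ P) (LinearMap.continuous_of_finiteDimensional _)
  have hY := (NormedSpace.expSeries_summable' (𝕂 := ℂ) Y).hasSum.map
    (mulLeftLinearMap q ℂ P) (LinearMap.continuous_of_finiteDimensional _)
  rw [NormedSpace.exp_eq_tsum ℂ, NormedSpace.exp_eq_tsum ℂ]
  refine hX.unique (hY.congr_fun fun k => ?_)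
  simp only [Function.comp_apply, mulRightLinearMap_apply, mulLeftLinearMap_apply,
    Matrix.smul_mul, Matrix.mul_smul, pow_mul_eq_mul_pow_of_mul_eq h]

theorem Matrix.smul_fromRows {R S m₁ m₂ n : Type*} [SMul R S] (c : R) (A : Matrix m₁ n S)
    (B : Matrix m₂ n S) : c • fromRows A B = fromRows (c • A) (c • B) := by
  ext (i | i) j <;> rfl

theorem Matrix.fromBlocks_fromBlocks_mul_fromBlocks_fromRows {R l m : Type*} [CommSemiring R]
    [Fintype l] [Fintype m] [DecidableEq l] [DecidableEq m]
    (A B : Matrix l l R) (C : Matrix l m R) (D : Matrix m l R) (E : Matrix m m R)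
    {c s : R} (hcs : c * s = 1) (hcc : c + c = s) :
    -- Without the ascriptions `*` elaborates to the multiplication of `CStarMatrix`.
    fromBlocks (fromBlocks A B B A) (fromRows C C) (fromCols D D) E *
        (fromBlocks (fromRows (c • 1) (c • 1)) 0 0 1 : Matrix ((l ⊕ l) ⊕ m) (l ⊕ m) R) =
      (fromBlocks (fromRows (c • 1) (c • 1)) 0 0 1 : Matrix ((l ⊕ l) ⊕ m) (l ⊕ m) R) *
        fromBlocks (A + B) (s • C) (s • D) E := by
  simp only [fromBlocks_multiply, fromBlocks_mul_fromRows, fromCols_mul_fromRows, fromRows_mul,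
    Matrix.mul_smul, Matrix.smul_mul, Matrix.mul_one, Matrix.one_mul, Matrix.mul_zero,
    Matrix.zero_mul, add_zero, zero_add, smul_zero, smul_add, smul_fromRows, smul_smul,
    mul_comm s c, hcs, one_smul, ← add_smul, hcc, add_comm (c • B)]

theorem stmt6_general (n m : ℕ) (L' Aφ : Matrix (Fin n) (Fin n) ℝ)
    (AS : Matrix (Fin n) (Fin m) ℝ) (LS : Matrix (Fin m) (Fin m) ℝ)
    (M : Matrix ((Fin n ⊕ Fin n) ⊕ Fin m) ((Fin n ⊕ Fin n) ⊕ Fin m) ℝ)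
    (hM : M = fromBlocks (fromBlocks L' Aφ Aφ L') (fromRows AS AS)
        (fromCols ASᵀ ASᵀ) LS)
    (N : Matrix ((Fin n ⊕ Fin n) ⊕ Fin m) (Fin n ⊕ Fin m) ℝ)
    (hN : N = fromBlocks
        (fromRows ((Real.sqrt 2)⁻¹ • (1 : Matrix (Fin n) (Fin n) ℝ))
          ((Real.sqrt 2)⁻¹ • (1 : Matrix (Fin n) (Fin n) ℝ))) 0
        0 (1 : Matrix (Fin m) (Fin m) ℝ))
    (Mtilde : Matrix (Fin n ⊕ Fin m) (Fin n ⊕ Fin m) ℝ)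
    (hMt : Mtilde = fromBlocks (L' + Aφ) (Real.sqrt 2 • AS) (Real.sqrt 2 • ASᵀ) LS)
    (t : ℝ) :
    NormedSpace.exp ((Complex.I * (t : ℂ)) • M.map (Complex.ofReal)) *
        N.map (Complex.ofReal) =
      N.map (Complex.ofReal) *
        NormedSpace.exp ((Complex.I * (t : ℂ)) • Mtilde.map (Complex.ofReal)) := by
  have hsqrt_two : Real.sqrt 2 ≠ 0 := by positivity
  have hreal : M * N = N * Mtilde := by
    subst hM hN hMt
    refine fromBlocks_fromBlocks_mul_fromBlocks_fromRows _ _ _ _ _ (inv_mul_cancel₀ hsqrt_two) ?_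
    field_simp
    norm_num
  have hcomplex : M.map ofReal * N.map ofReal = N.map ofReal * Mtilde.map ofReal := by
    have h := congrArg (·.map ofRealHom) hreal
    rwa [Matrix.map_mul, Matrix.map_mul] at h
  apply exp_mul_eq_mul_exp_of_mul_eq
  rw [Matrix.smul_mul, hcomplex, Matrix.mul_smul]

/-- For every real `t`, `exp(itM) · N = N · exp(itM̃₊)`, where `M` is the block
matrix `[[L', Aφ, AS], [Aφ, L', AS], [ASᵀ, ASᵀ, LS]]`,
`N = [[(1/√2)Iₙ, 0], [(1/√2)Iₙ, 0], [0, Iₘ]]` and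
`M̃₊ = [[L' + Aφ, √2·AS], [√2·ASᵀ, LS]]`, all viewed over `ℂ`. -/
theorem stmt6 (n m : ℕ) (L' Aφ : Matrix (Fin n) (Fin n) ℝ)
    (AS : Matrix (Fin n) (Fin m) ℝ) (LS : Matrix (Fin m) (Fin m) ℝ)
    (hL' : L'.IsSymm) (hAφ : Aφ.IsSymm) (hLS : LS.IsSymm)
    (M : Matrix ((Fin n ⊕ Fin n) ⊕ Fin m) ((Fin n ⊕ Fin n) ⊕ Fin m) ℝ)
    (hM : M = fromBlocks (fromBlocks L' Aφ Aφ L') (fromRows AS AS)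
        (fromCols ASᵀ ASᵀ) LS)
    (N : Matrix ((Fin n ⊕ Fin n) ⊕ Fin m) (Fin n ⊕ Fin m) ℝ)
    (hN : N = fromBlocks
        (fromRows ((Real.sqrt 2)⁻¹ • (1 : Matrix (Fin n) (Fin n) ℝ))
          ((Real.sqrt 2)⁻¹ • (1 : Matrix (Fin n) (Fin n) ℝ))) 0
        0 (1 : Matrix (Fin m) (Fin m) ℝ))
    (Mtilde : Matrix (Fin n ⊕ Fin m) (Fin n ⊕ Fin m) ℝ)
    (hMt : Mtilde = fromBlocks (L' + Aφ) (Real.sqrt 2 • AS) (Real.sqrt 2 • ASᵀ) LS)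
    (t : ℝ) :
    NormedSpace.exp ((Complex.I * (t : ℂ)) • M.map (Complex.ofReal)) *
        N.map (Complex.ofReal) =
      N.map (Complex.ofReal) *
        NormedSpace.exp ((Complex.I * (t : ℂ)) • Mtilde.map (Complex.ofReal)) :=
  stmt6_general n m L' Aφ AS LS M hM N hN Mtilde hMt t
end

section
/- Let q ≠ 0 be real and let 𝓛 be the 2×2 real symmetric matrix with diagonal entries 1 + q² and off-diagonal entries −q (the q-Laplacian of the path P₂). Then exp(i·(π/(2q))·𝓛) maps e₁ to a unimodular complex multiple of e₂; that is, the path P₂ admits perfect state transfer between its two vertices at time π/(2q) with respect to its q-Laplacian. -/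
/-!
Writing `X` for the swap matrix `!![0, 1; 1, 0]`, we have `𝓛 = (1 + q²) • 1 - q • X` and
`X * X = 1`, so `exp (i t 𝓛) = e^{i t (1 + q²)} • (cos (t q) • 1 - (i sin (t q)) • X)`.
At `t = π / (2q)` the cosine vanishes, leaving a unimodular multiple of `X`, which sends `e₁` to `e₂`.
-/

open Matrix Real

section Involution

variable {𝔸 : Type*} [NormedRing 𝔸] [NormedAlgebra ℂ 𝔸] [CompleteSpace 𝔸] {x : 𝔸}

theorem exp_smul_eq_cosh_add_sinh_of_mul_self_eq_one (hx : x * x = 1) (z : ℂ) :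
    NormedSpace.exp (z • x) = Complex.cosh z • 1 + Complex.sinh z • x := by
  have hpow : ∀ k : ℕ, x ^ (2 * k) = 1 := fun k => by rw [pow_mul, sq, hx, one_pow]
  refine (NormedSpace.exp_series_hasSum_exp' (𝕂 := ℂ) (z • x)).unique ?_
  refine HasSum.even_add_odd ?_ ?_
  · convert (Complex.hasSum_cosh z).smul_const (1 : 𝔸) using 2 with k
    rw [smul_pow, hpow, smul_smul, div_eq_inv_mul]
  · convert (Complex.hasSum_sinh z).smul_const x using 2 with k
    rw [smul_pow, pow_succ x, hpow, one_mul, smul_smul, div_eq_inv_mul]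

theorem exp_smul_one_add_smul_of_mul_self_eq_one (hx : x * x = 1) (a z : ℂ) :
    NormedSpace.exp (a • (1 : 𝔸) + z • x) =
      Complex.exp a • (Complex.cosh z • 1 + Complex.sinh z • x) := by
  let +nondep : NormedAlgebra ℚ 𝔸 := .restrictScalars ℚ ℂ 𝔸
  rw [NormedSpace.exp_add_of_commute (((Commute.one_left x).smul_left a).smul_right z),
    exp_smul_eq_cosh_add_sinh_of_mul_self_eq_one hx, ← Algebra.algebraMap_eq_smul_one,
    ← NormedSpace.algebraMap_exp_comm, ← Complex.exp_eq_exp_ℂ, ← Algebra.smul_def]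

end Involution

theorem Matrix.exp_smul_one_add_smul_of_mul_self_eq_one {n : Type*} [Fintype n] [DecidableEq n]
    {X : Matrix n n ℂ} (hX : X * X = 1) (a z : ℂ) :
    NormedSpace.exp (a • (1 : Matrix n n ℂ) + z • X) =
      Complex.exp a • (Complex.cosh z • 1 + Complex.sinh z • X) :=
  open scoped Norms.Operator in _root_.exp_smul_one_add_smul_of_mul_self_eq_one hX a z

theorem Matrix.swap_mul_swap :
    (!![0, 1; 1, 0] : Matrix (Fin 2) (Fin 2) ℂ) * !![0, 1; 1, 0] = 1 := by
  simp [Matrix.one_fin_two]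

/-- The path `P₂` admits perfect state transfer between its two vertices at time
`π/(2q)` with respect to its q-Laplacian `[[1+q², −q], [−q, 1+q²]]`:
`exp(i·(π/(2q))·𝓛)` maps `e₁` to a unimodular multiple of `e₂`. -/
theorem stmt14 (q : ℝ) (hq : q ≠ 0)
    (𝓛 : Matrix (Fin 2) (Fin 2) ℂ)
    (h𝓛 : 𝓛 = !![(1 : ℂ) + (q : ℂ) ^ 2, -(q : ℂ); -(q : ℂ), (1 : ℂ) + (q : ℂ) ^ 2]) :
    ∃ γ : ℂ, ‖γ‖ = 1 ∧
      (NormedSpace.exp ((Complex.I * ((π / (2 * q) : ℝ) : ℂ)) • 𝓛)).mulVec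
          ((Pi.single 0 1 : Fin 2 → ℂ)) = γ • (Pi.single 1 1 : Fin 2 → ℂ) := by
  set θ : ℝ := π / (2 * q) * (1 + q ^ 2)
  have hsplit : (Complex.I * ((π / (2 * q) : ℝ) : ℂ)) • 𝓛 =
      ((θ : ℂ) * Complex.I) • 1 + (-(π / 2 : ℂ) * Complex.I) • !![0, 1; 1, 0] := by
    have hq' : (q : ℂ) ≠ 0 := by exact_mod_cast hq
    subst h𝓛
    ext i j
    fin_cases i <;> fin_cases j <;> simp [θ] <;> field_simp
  refine ⟨Complex.exp (θ * Complex.I) * -Complex.I, by simp [Complex.norm_exp_ofReal_mul_I], ?_⟩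
  rw [hsplit, Matrix.exp_smul_one_add_smul_of_mul_self_eq_one Matrix.swap_mul_swap,
    Complex.cosh_mul_I, Complex.sinh_mul_I]
  ext i
  fin_cases i <;> simp
end

section
/- Let G be a finite weighted graph with real symmetric matrix M (e.g., its q-Laplacian), and suppose u, v are twin vertices, meaning that the u-th and v-th rows of M agree off the positions u, v, and M_{uu} = M_{vv}, M_{uv} = M_{vu}. Then e_u − e_v is an eigenvector of M with eigenvalue M_{uu} − M_{uv}. Consequently, for all t ∈ ℝ, |(1/2)(e_u − e_v)ᵀ exp(itM)(e_u − e_v)| = 1, i.e., the pair state (1/√2)(e_u − e_v) is sharply 1-sedentary. -/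
/-!
Twin symmetry of the rows `u`, `v` (together with the symmetry of `M`) makes `e_u - e_v` an
eigenvector of `M` for `λ = M_uu - M_uv`. The exponential series acts on an eigenvector through the
scalar series, so `exp(itM)(e_u - e_v) = e^{itλ}(e_u - e_v)`, and the quadratic form is
`e^{itλ} ‖e_u - e_v‖² = 2 e^{itλ}`, of modulus `2`.
-/

open Matrix

theorem HasSum.matrix_mulVec {X m n R : Type*} [Fintype n] [NonUnitalNonAssocSemiring R]
    [TopologicalSpace R] [IsTopologicalSemiring R] {L : SummationFilter X}
    {f : X → Matrix m n R} {A : Matrix m n R} (hf : HasSum f A L) (x : n → R) :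
    HasSum (fun i => f i *ᵥ x) (A *ᵥ x) L :=
  hf.map (mulVec.addMonoidHomLeft x) (continuous_id.matrix_mulVec continuous_const)

theorem Matrix.pow_mulVec_of_mulVec_eq_smul {m R : Type*} [Fintype m] [DecidableEq m]
    [CommSemiring R] {A : Matrix m m R} {x : m → R} {c : R} (h : A *ᵥ x = c • x) (k : ℕ) :
    (A ^ k) *ᵥ x = c ^ k • x := by
  induction k with
  | zero => simp
  | succ k ih =>
    rw [pow_succ, ← mulVec_mulVec, h, mulVec_smul, ih, smul_smul, pow_succ']

-- The operator norm only serves to make the exponential series available; the statement does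
-- not depend on it.
open scoped Norms.Operator in
theorem Matrix.exp_mulVec_of_mulVec_eq_smul {m 𝕂 : Type*} [Fintype m] [DecidableEq m]
    [RCLike 𝕂] {A : Matrix m m 𝕂} {x : m → 𝕂} {c : 𝕂} (h : A *ᵥ x = c • x) :
    NormedSpace.exp A *ᵥ x = NormedSpace.exp c • x := by
  have hA := (NormedSpace.exp_series_hasSum_exp' (𝕂 := 𝕂) A).matrix_mulVec x
  have hc := (NormedSpace.exp_series_hasSum_exp' (𝕂 := 𝕂) c).smul_const x
  simp only [smul_mulVec, pow_mulVec_of_mulVec_eq_smul h, smul_smul] at hA hc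
  exact hA.unique hc

theorem Matrix.mulVec_single_sub_single_of_twin {ι R : Type*} [Fintype ι] [DecidableEq ι]
    [Ring R] {M : Matrix ι ι R} (hM : M.IsSymm) {u v : ι}
    (htwin : ∀ w, w ≠ u → w ≠ v → M u w = M v w) (hdiag : M u u = M v v) :
    M *ᵥ (Pi.single u 1 - Pi.single v 1) = (M u u - M u v) • (Pi.single u 1 - Pi.single v 1) := by
  have hsymm : ∀ i j, M i j = M j i := fun i j => hM.apply j i
  ext w
  simp only [mulVec_sub, mulVec_single_one, Pi.sub_apply, col_apply, Pi.smul_apply,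
    Pi.single_apply, smul_eq_mul]
  by_cases hwu : w = u
  · subst hwu
    by_cases hwv : w = v <;> simp [hwv]
  · by_cases hwv : w = v
    · subst hwv
      simp [hwu, hsymm w u, hdiag]
    · simp [hwu, hwv, hsymm w u, hsymm w v, htwin w hwu hwv]

theorem Matrix.single_sub_single_dotProduct_self {ι R : Type*} [Fintype ι] [DecidableEq ι]
    [Ring R] {u v : ι} (huv : u ≠ v) :
    (Pi.single u 1 - Pi.single v 1 : ι → R) ⬝ᵥ (Pi.single u 1 - Pi.single v 1) = 2 := by
  simp [dotProduct_sub, huv, huv.symm]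
  norm_num

/-- If `u, v` are twin vertices for a real symmetric matrix `M` (rows `u` and
`v` agree off `{u,v}`, `M_{uu} = M_{vv}`), then `e_u − e_v` is an eigenvector of
`M` with eigenvalue `M_{uu} − M_{uv}`, and the pair state `(1/√2)(e_u − e_v)` is
sharply 1-sedentary: `|(1/2)(e_u − e_v)ᵀ exp(itM)(e_u − e_v)| = 1` for all `t`. -/
theorem stmt17 (n : ℕ) (M : Matrix (Fin n) (Fin n) ℝ) (hM : M.IsSymm)
    (u v : Fin n) (huv : u ≠ v)
    (htwin : ∀ w : Fin n, w ≠ u → w ≠ v → M u w = M v w)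
    (hdiag : M u u = M v v)
    (e : Fin n → ℝ)
    (he : e = fun w => (if w = u then (1 : ℝ) else 0) - (if w = v then 1 else 0)) :
    M.mulVec e = (M u u - M u v) • e ∧
      ∀ t : ℝ,
        ‖((1 / 2) *
          (dotProduct (fun i => ((e i : ℝ) : ℂ))
            ((NormedSpace.exp ((Complex.I * (t : ℂ)) • M.map Complex.ofReal)).mulVec
              (fun i => ((e i : ℝ) : ℂ)))))‖ = 1 := by
  have hreal : e = Pi.single u 1 - Pi.single v 1 := by
    rw [he]; ext w; simp only [Pi.sub_apply, Pi.single_apply]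
  have hcplx : (fun i => (e i : ℂ)) = Pi.single u 1 - Pi.single v 1 := by
    subst hreal; ext w
    simp only [Pi.sub_apply, Complex.ofReal_sub, Pi.single_apply]
    split_ifs <;> simp
  refine ⟨hreal ▸ mulVec_single_sub_single_of_twin hM htwin hdiag, fun t => ?_⟩
  have heig := mulVec_single_sub_single_of_twin (u := u) (v := v) (hM.map Complex.ofReal)
    (fun w hwu hwv => by simp [htwin w hwu hwv]) (by simp [hdiag])
  have hphase :
      Complex.I * t * ((M u u : ℂ) - M u v) = ((t * (M u u - M u v) : ℝ) : ℂ) * Complex.I := by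
    push_cast; ring
  rw [hcplx, exp_mulVec_of_mulVec_eq_smul (by rw [smul_mulVec, heig, smul_smul]), dotProduct_smul,
    single_sub_single_dotProduct_self huv, ← Complex.exp_eq_exp_ℂ]
  rw [map_apply, map_apply, hphase, smul_eq_mul, norm_mul, norm_mul,
    Complex.norm_exp_ofReal_mul_I]
  norm_num
end
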